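/- Let v_1,...,v_n ∈ ℝ^{n-1} be the vertices of an (n−1)-simplex Δ and ℓ a linear functional with ∑_{i=1}^n ℓ(v_i) = 0. Then ∫_Δ ℓ(x)^3 dx = (2·Vol(Δ)/(n(n+1)(n+2)))·∑_{i=1}^n ℓ(v_i)^3. -/

import Mathlib

/-!
Writing `λ₀, …, λ_d` for the barycentric coordinates of `Δ`, we have `ℓ = ∑ ℓ(v_m) λ_m` on `Δ`, so
`∫_Δ ℓ³` is a combination of the moments `∫_Δ λ_i λ_j λ_k`. An affine map carries the corner simplex
`{t ≥ 0, ∑ t ≤ 1}` onto `Δ`; its Jacobian need not be computed: by uniqueness of Haar measure it is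
a constant, fixed by comparing volumes. On the corner simplex the moments are Dirichlet integrals
`∫ ∏ λ_m ^ γ_m = ∏ γ_m! / (d + ∑ γ)!` (Fubini and the beta integral), and summing them gives
`∫_Δ ℓ³ = d! Vol(Δ) (p₁³ + 3 p₁ p₂ + 2 p₃) / (d + 3)!` with `p_k = ∑ ℓ(v_m)^k`; here `p₁ = 0`.
-/

open MeasureTheory Measure Set Nat

theorem integral_pow_mul_sub_pow (u : ℝ) (a b : ℕ) :
    ∫ x in (0 : ℝ)..u, x ^ a * (u - x) ^ b
      = a ! * b ! / (a + b + 1)! * u ^ (a + b + 1) := by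
  induction b generalizing a with
  | zero =>
    simp [Nat.factorial_succ]
    field_simp
  | succ b ih =>
    have hw : ∀ x ∈ uIcc 0 u, HasDerivAt (fun x : ℝ => (u - x) ^ (b + 1))
        (-((b + 1) * (u - x) ^ b)) x :=
      fun x _ => by simpa using ((hasDerivAt_id x).const_sub u).fun_pow (b + 1)
    have hv : ∀ x ∈ uIcc 0 u, HasDerivAt (fun x : ℝ => x ^ (a + 1) / (a + 1)) (x ^ a) x :=
      fun x _ => ((hasDerivAt_pow (a + 1) x).div_const _).congr_deriv (by field_simp; simp)
    have parts := intervalIntegral.integral_mul_deriv_eq_deriv_mul hw hv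
      (by apply Continuous.intervalIntegrable; fun_prop)
      (by apply Continuous.intervalIntegrable; fun_prop)
    simp only [sub_self, zero_pow (succ_ne_zero _), zero_mul, zero_div, mul_zero, sub_zero,
      zero_sub] at parts
    calc ∫ x in (0 : ℝ)..u, x ^ a * (u - x) ^ (b + 1)
        = ∫ x in (0 : ℝ)..u, (u - x) ^ (b + 1) * x ^ a := by simp only [mul_comm]
      _ = (b + 1) / (a + 1) * ∫ x in (0 : ℝ)..u, x ^ (a + 1) * (u - x) ^ b := by
        rw [parts, ← intervalIntegral.integral_const_mul, ← intervalIntegral.integral_neg]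
        congr 1 with x
        field_simp
      _ = _ := by
        rw [ih, Nat.factorial_succ a, Nat.factorial_succ b,
          show a + 1 + b + 1 = a + (b + 1) + 1 by ring]
        push_cast
        field_simp

def cornerSimplex (d : ℕ) : Set (Fin d → ℝ) := {t | (∀ i, 0 ≤ t i) ∧ ∑ i, t i ≤ 1}

theorem isCompact_cornerSimplex (d : ℕ) : IsCompact (cornerSimplex d) := by
  refine (isCompact_Icc (a := (0 : Fin d → ℝ)) (b := 1)).of_isClosed_subset ?_
    fun t ht => ⟨ht.1, fun i => ?_⟩
  · rw [cornerSimplex, ofPred_and, ofPred_forall]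
    exact (isClosed_iInter fun i => isClosed_le continuous_const (continuous_apply i)).inter
      (isClosed_le (by fun_prop : Continuous fun t : Fin d → ℝ => ∑ i, t i) continuous_const)
  · exact (Finset.single_le_sum (fun j _ => ht.1 j) (Finset.mem_univ i)).trans ht.2

theorem measurableSet_cornerSimplex (d : ℕ) : MeasurableSet (cornerSimplex d) :=
  (isCompact_cornerSimplex d).isClosed.measurableSet

theorem snoc_mem_cornerSimplex_iff {d : ℕ} {y : Fin d → ℝ} {x : ℝ} :
    Fin.snoc y x ∈ cornerSimplex (d + 1) ↔ y ∈ cornerSimplex d ∧ x ∈ Icc 0 (1 - ∑ i, y i) := by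
  simp only [cornerSimplex, mem_ofPred_eq, Fin.forall_fin_succ', Fin.snoc_castSucc,
    Fin.snoc_last, Fin.sum_univ_castSucc, mem_Icc]
  constructor
  · rintro ⟨⟨hy, hx⟩, hs⟩
    exact ⟨⟨hy, by linarith⟩, hx, by linarith⟩
  · rintro ⟨⟨hy, -⟩, hx, hs⟩
    exact ⟨⟨hy, hx⟩, by linarith⟩

theorem integral_eq_integral_integral_snoc {E : Type*} [NormedAddCommGroup E] [NormedSpace ℝ E]
    {d : ℕ} {f : (Fin (d + 1) → ℝ) → E} (hf : Integrable f) :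
    ∫ t, f t = ∫ y, ∫ x, f (Fin.snoc y x) := by
  have e := (measurePreserving_piFinSuccAbove (fun _ : Fin (d + 1) => (volume : Measure ℝ))
    (Fin.last d)).symm
  simp only [← volume_pi] at e
  have hsnoc : ∀ p : ℝ × (Fin d → ℝ),
      (MeasurableEquiv.piFinSuccAbove (fun _ => ℝ) (Fin.last d)).symm p = Fin.snoc p.2 p.1 :=
    fun p => by simp [MeasurableEquiv.piFinSuccAbove_symm_apply, Fin.snocEquiv]
  rw [← e.integral_comp', integral_prod_symm]
  · simp only [hsnoc]
  · exact e.integrable_comp_emb (MeasurableEquiv.measurableEmbedding _) |>.2 hf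

theorem integral_indicator_cornerSimplex_snoc {d : ℕ} (f : (Fin (d + 1) → ℝ) → ℝ)
    (y : Fin d → ℝ) :
    ∫ x, (cornerSimplex (d + 1)).indicator f (Fin.snoc y x)
      = (cornerSimplex d).indicator
          (fun y => ∫ x in (0 : ℝ)..1 - ∑ i, y i, f (Fin.snoc y x)) y := by
  by_cases hy : y ∈ cornerSimplex d
  · have hslice : ∀ x, (cornerSimplex (d + 1)).indicator f (Fin.snoc y x)
        = (Icc 0 (1 - ∑ i, y i)).indicator (fun x => f (Fin.snoc y x)) x := fun x => by
      by_cases hx : x ∈ Icc 0 (1 - ∑ i, y i)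
      · rw [indicator_of_mem (snoc_mem_cornerSimplex_iff.2 ⟨hy, hx⟩), indicator_of_mem hx]
      · rw [indicator_of_notMem (fun h => hx (snoc_mem_cornerSimplex_iff.1 h).2),
          indicator_of_notMem hx]
    rw [integral_congr_ae (.of_forall hslice), integral_indicator measurableSet_Icc,
      integral_Icc_eq_integral_Ioc, ← intervalIntegral.integral_of_le (sub_nonneg.2 hy.2),
      indicator_of_mem hy]
  · simp [snoc_mem_cornerSimplex_iff, hy]

theorem setIntegral_cornerSimplex_prod_pow_mul_pow {d : ℕ} (α : Fin d → ℕ) (β : ℕ) :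
    ∫ t in cornerSimplex d, (∏ i, t i ^ α i) * (1 - ∑ i, t i) ^ β
      = (∏ i, ((α i)! : ℝ)) * β ! / (d + ∑ i, α i + β)! := by
  induction d generalizing β with
  | zero =>
    have : cornerSimplex 0 = univ := by ext; simp [cornerSimplex]
    simp [this, measureReal_def, volume_pi]
    exact (div_self (by positivity)).symm
  | succ d ih =>
    have hsnoc : ∀ y x, (∏ i, (Fin.snoc y x : Fin (d + 1) → ℝ) i ^ α i)
        * (1 - ∑ i, (Fin.snoc y x : Fin (d + 1) → ℝ) i) ^ β
        = (∏ i, y i ^ α i.castSucc) * (x ^ α (Fin.last d) * ((1 - ∑ i, y i) - x) ^ β) := by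
      intro y x
      simp only [Fin.prod_univ_castSucc, Fin.sum_univ_castSucc, Fin.snoc_castSucc, Fin.snoc_last]
      ring
    have hint : Integrable ((cornerSimplex (d + 1)).indicator
        fun t => (∏ i, t i ^ α i) * (1 - ∑ i, t i) ^ β) :=
      ((by fun_prop : Continuous _).continuousOn.integrableOn_compact
        (isCompact_cornerSimplex _)).integrable_indicator (measurableSet_cornerSimplex _)
    rw [← integral_indicator (measurableSet_cornerSimplex _),
      integral_eq_integral_integral_snoc hint]
    simp_rw [integral_indicator_cornerSimplex_snoc, hsnoc, intervalIntegral.integral_const_mul,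
      integral_pow_mul_sub_pow]
    rw [integral_indicator (measurableSet_cornerSimplex _),
      integral_congr_ae (.of_forall fun y => mul_left_comm _ _ _), integral_const_mul, ih,
      Fin.prod_univ_castSucc, Fin.sum_univ_castSucc,
      show d + ∑ i : Fin d, α i.castSucc + (α (Fin.last d) + β + 1)
        = d + 1 + (∑ i : Fin d, α i.castSucc + α (Fin.last d)) + β by ring]
    field_simp

def bary {d : ℕ} (t : Fin d → ℝ) : Fin (d + 1) → ℝ := Fin.snoc t (1 - ∑ i, t i)

@[fun_prop]
theorem continuous_bary_apply {d : ℕ} (m : Fin (d + 1)) :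
    Continuous fun t : Fin d → ℝ => bary t m :=
  (continuous_apply m).comp (by fun_prop)

theorem sum_bary {d : ℕ} (t : Fin d → ℝ) : ∑ m, bary t m = 1 := by
  simp [bary, Fin.sum_univ_castSucc]

theorem setIntegral_cornerSimplex_prod_bary_pow {d : ℕ} (γ : Fin (d + 1) → ℕ) :
    ∫ t in cornerSimplex d, ∏ m, bary t m ^ γ m = (∏ m, ((γ m)! : ℝ)) / (d + ∑ m, γ m)! := by
  simpa only [bary, Fin.prod_univ_castSucc, Fin.sum_univ_castSucc, Fin.snoc_castSucc,
    Fin.snoc_last, ← add_assoc, Function.comp_apply] using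
    setIntegral_cornerSimplex_prod_pow_mul_pow (γ ∘ Fin.castSucc) _

theorem measureReal_cornerSimplex (d : ℕ) : volume.real (cornerSimplex d) = 1 / d ! := by
  simpa using setIntegral_cornerSimplex_prod_bary_pow (d := d) 0

/-- `∏ m, (multiplicity of m in (i, j, k))!`, i.e. the order of the stabiliser of `(i, j, k)` in
the symmetric group on three letters. -/
def tripleStabilizerCard {ι : Type*} [DecidableEq ι] (i j k : ι) : ℕ :=
  1 + (if i = j then 1 else 0) + (if i = k then 1 else 0) + (if j = k then 1 else 0)
    + (if i = j ∧ j = k then 2 else 0)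

theorem prod_factorial_multiplicity {ι : Type*} [Fintype ι] [DecidableEq ι] (i j k : ι) :
    ∏ m, ((if m = i then 1 else 0) + (if m = j then 1 else 0) + (if m = k then 1 else 0))!
      = tripleStabilizerCard i j k := by
  unfold tripleStabilizerCard
  by_cases hij : i = j
  · subst hij
    rw [Finset.prod_eq_single i (fun m _ hm => by split_ifs <;> simp_all) (by simp)]
    by_cases hik : i = k
    · subst hik; simp [Nat.factorial]
    · simp [hik]
  by_cases hik : i = k
  · subst hik
    rw [Finset.prod_eq_single i (fun m _ hm => by split_ifs <;> simp_all) (by simp)]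
    simp [hij, Ne.symm hij]
  by_cases hjk : j = k
  · subst hjk
    rw [Finset.prod_eq_single j (fun m _ hm => by split_ifs <;> simp_all) (by simp)]
    simp [hij, Ne.symm hij]
  rw [Finset.prod_eq_one fun m _ => by split_ifs <;> simp_all]
  simp [hij, hik, hjk]

theorem sum_mul_mul_tripleStabilizerCard {ι : Type*} [Fintype ι] [DecidableEq ι] (B : ι → ℝ) :
    ∑ i, ∑ j, ∑ k, B i * B j * B k * tripleStabilizerCard i j k
      = (∑ i, B i) ^ 3 + 3 * (∑ i, B i) * (∑ i, B i ^ 2) + 2 * ∑ i, B i ^ 3 := by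
  simp only [tripleStabilizerCard, Nat.cast_add, Nat.cast_ite, Nat.cast_one, Nat.cast_zero,
    Nat.cast_ofNat, mul_add, mul_one, mul_ite, mul_zero, Finset.sum_add_distrib, ite_and,
    Finset.sum_ite_irrel, Finset.sum_const_zero, Finset.sum_ite_eq, Finset.mem_univ, if_true,
    ← Finset.sum_mul, ← Finset.mul_sum]
  simp only [mul_right_comm _ (∑ i, B i), ← Finset.sum_mul]
  simp only [mul_assoc, ← Finset.mul_sum, ← Finset.sum_mul, sq, pow_three]
  ring

theorem setIntegral_cornerSimplex_bary_mul_mul {d : ℕ} (i j k : Fin (d + 1)) :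
    ∫ t in cornerSimplex d, bary t i * bary t j * bary t k
      = tripleStabilizerCard i j k / (d + 3)! := by
  set γ : Fin (d + 1) → ℕ := fun m =>
    (if m = i then 1 else 0) + (if m = j then 1 else 0) + (if m = k then 1 else 0)
  have hprod : ∀ t : Fin d → ℝ, ∏ m, bary t m ^ γ m = bary t i * bary t j * bary t k := by
    intro t
    simp only [γ, pow_add, Finset.prod_mul_distrib]
    simp only [pow_ite, pow_one, pow_zero, Finset.prod_ite_eq', Finset.mem_univ, if_true]
  have hsum : ∑ m, γ m = 3 := by simp [γ, Finset.sum_add_distrib]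
  simp only [← hprod, setIntegral_cornerSimplex_prod_bary_pow, hsum, γ]
  exact_mod_cast congrArg (fun n : ℕ => (n : ℝ) / (d + 3)!) (prod_factorial_multiplicity i j k)

theorem setIntegral_cornerSimplex_sum_mul_bary_pow_three {d : ℕ} (B : Fin (d + 1) → ℝ) :
    ∫ t in cornerSimplex d, (∑ m, B m * bary t m) ^ 3
      = ((∑ m, B m) ^ 3 + 3 * (∑ m, B m) * (∑ m, B m ^ 2) + 2 * ∑ m, B m ^ 3) / (d + 3)! := by
  have hint : ∀ i j k, IntegrableOn (fun t => B i * B j * B k * (bary t i * bary t j * bary t k))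
      (cornerSimplex d) := fun i j k =>
    (by fun_prop : Continuous _).continuousOn.integrableOn_compact (isCompact_cornerSimplex d)
  have hexpand : ∀ t : Fin d → ℝ, (∑ m, B m * bary t m) ^ 3
      = ∑ i, ∑ j, ∑ k, B i * B j * B k * (bary t i * bary t j * bary t k) := by
    intro t
    simp only [pow_three, Finset.sum_mul, Finset.mul_sum]
    refine Finset.sum_congr rfl fun i _ => Finset.sum_congr rfl fun j _ =>
      Finset.sum_congr rfl fun k _ => by ring
  calc ∫ t in cornerSimplex d, (∑ m, B m * bary t m) ^ 3
      = ∑ i, ∑ j, ∑ k,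
          ∫ t in cornerSimplex d, B i * B j * B k * (bary t i * bary t j * bary t k) := by
        simp_rw [hexpand]
        rw [integral_finsetSum _ fun i _ => integrable_finsetSum _ fun j _ =>
          integrable_finsetSum _ fun k _ => hint i j k]
        refine Finset.sum_congr rfl fun i _ => ?_
        rw [integral_finsetSum _ fun j _ => integrable_finsetSum _ fun k _ => hint i j k]
        exact Finset.sum_congr rfl fun j _ => integral_finsetSum _ fun k _ => hint i j k
    _ = (∑ i, ∑ j, ∑ k, B i * B j * B k * tripleStabilizerCard i j k) / (d + 3)! := by
        simp only [integral_const_mul, setIntegral_cornerSimplex_bary_mul_mul,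
          Finset.sum_div, mul_div_assoc]
    _ = _ := by rw [sum_mul_mul_tripleStabilizerCard]

theorem image_bary_cornerSimplex (d : ℕ) :
    bary '' cornerSimplex d = stdSimplex ℝ (Fin (d + 1)) := by
  ext w
  constructor
  · rintro ⟨t, ht, rfl⟩
    refine ⟨fun m => ?_, sum_bary t⟩
    induction m using Fin.lastCases with
    | last => simpa [bary] using ht.2
    | cast i => simpa [bary] using ht.1 i
  · rintro ⟨hw, hsum⟩
    have hlast : 1 - ∑ i, Fin.init w i = w (Fin.last d) := by
      rw [← hsum, Fin.sum_univ_castSucc]; simp [Fin.init]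
    refine ⟨Fin.init w, ⟨fun i => hw _, ?_⟩, ?_⟩
    · linarith [hw (Fin.last d)]
    · rw [bary, hlast, Fin.snoc_init_self]

theorem image_cornerSimplex_eq_convexHull {E : Type*} [AddCommGroup E] [Module ℝ E] {d : ℕ}
    (v : Fin (d + 1) → E) :
    (fun t => ∑ m, bary t m • v m) '' cornerSimplex d = convexHull ℝ (range v) := by
  classical
  have hv : range v = Fintype.linearCombination ℝ v '' range fun i => Pi.single i 1 := by
    rw [← range_comp]; ext; simp
  rw [hv, ← LinearMap.image_convexHull, convexHull_rangle_single_eq_stdSimplex,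
    ← image_bary_cornerSimplex, image_image]
  simp [Fintype.linearCombination_apply]

theorem exists_continuousLinearEquiv_add_eq_sum_bary {E : Type*} [NormedAddCommGroup E]
    [NormedSpace ℝ E] [FiniteDimensional ℝ E] {d : ℕ} (hd : Module.finrank ℝ E = d)
    {v : Fin (d + 1) → E} (hv : AffineIndependent ℝ v) :
    ∃ L : (Fin d → ℝ) ≃L[ℝ] E, ∀ t, v (Fin.last d) + L t = ∑ m, bary t m • v m := by
  have hli : LinearIndependent ℝ fun i : Fin d => v i.castSucc - v (Fin.last d) := by
    have h := (affineIndependent_iff_linearIndependent_vsub ℝ v (Fin.last d)).1 hv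
    have := h.comp (fun i : Fin d => (⟨i.castSucc, Fin.castSucc_ne_last i⟩ : {x // x ≠ Fin.last d}))
      fun i j h => by simpa using h
    simpa [Function.comp_def, vsub_eq_sub] using this
  let b := basisOfLinearIndependentOfCardEqFinrank' _ hli (by simp [hd])
  refine ⟨b.equivFun.symm.toContinuousLinearEquiv, fun t => ?_⟩
  simp only [LinearEquiv.coe_toContinuousLinearEquiv', Module.Basis.equivFun_symm_apply, b,
    coe_basisOfLinearIndependentOfCardEqFinrank', bary, Fin.sum_univ_castSucc,
    Fin.snoc_castSucc, Fin.snoc_last, smul_sub, sub_smul, Finset.sum_sub_distrib,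
    ← Finset.sum_smul, one_smul]
  abel

theorem exists_setIntegral_image_add_eq {E F : Type*} [NormedAddCommGroup E] [NormedSpace ℝ E]
    [FiniteDimensional ℝ E] [MeasurableSpace E] [BorelSpace E] [NormedAddCommGroup F]
    [NormedSpace ℝ F] [FiniteDimensional ℝ F] [MeasurableSpace F] [BorelSpace F]
    (μ : Measure E) [μ.IsAddHaarMeasure] (ν : Measure F) [ν.IsAddHaarMeasure]
    (c : E) (L : F ≃L[ℝ] E) :
    ∃ κ : ℝ, ∀ (f : E → ℝ) (s : Set F),
      ∫ x in (fun t => c + L t) '' s, f x ∂μ = κ * ∫ t in s, f (c + L t) ∂ν := by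
  let ψ : F ≃ᵐ E := (L.toHomeomorph.trans (Homeomorph.addLeft c)).toMeasurableEquiv
  have hψ : ⇑ψ = fun t => c + L t := rfl
  have hmap : μ.map ψ.symm = μ.map L.symm := by
    have : ⇑ψ.symm = L.symm ∘ (-c + ·) := rfl
    rw [this, ← map_map L.symm.continuous.measurable (measurable_const_add _),
      map_add_left_eq_self]
  set κ := addHaarScalarFactor (μ.map L.symm) ν
  refine ⟨κ, fun f s => ?_⟩
  calc ∫ x in (fun t => c + L t) '' s, f x ∂μ = ∫ t in s, f (ψ t) ∂(μ.map ψ.symm) := by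
        rw [setIntegral_map_equiv, ← hψ, ψ.image_eq_preimage_symm]
        simp
    _ = ∫ t in s, f (c + L t) ∂(κ • ν) := by rw [hmap, ← isAddLeftInvariant_eq_smul, hψ]
    _ = κ * ∫ t in s, f (c + L t) ∂ν := by
        rw [restrict_smul, integral_smul_nnreal_measure, NNReal.smul_def, smul_eq_mul]

section Simplex

variable {E : Type*} [NormedAddCommGroup E] [NormedSpace ℝ E] [FiniteDimensional ℝ E]
  [MeasurableSpace E] [BorelSpace E] (μ : Measure E) [μ.IsAddHaarMeasure]
  {d : ℕ} {v : Fin (d + 1) → E}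

theorem setIntegral_convexHull_eq (hd : Module.finrank ℝ E = d) (hv : AffineIndependent ℝ v)
    (f : E → ℝ) :
    ∫ x in convexHull ℝ (range v), f x ∂μ
      = d ! * μ.real (convexHull ℝ (range v))
          * ∫ t in cornerSimplex d, f (∑ m, bary t m • v m) := by
  obtain ⟨L, hL⟩ := exists_continuousLinearEquiv_add_eq_sum_bary hd hv
  obtain ⟨κ, hκ⟩ := exists_setIntegral_image_add_eq μ volume (v (Fin.last d)) L
  have pullback : ∀ f : E → ℝ, ∫ x in convexHull ℝ (range v), f x ∂μ
      = κ * ∫ t in cornerSimplex d, f (∑ m, bary t m • v m) := by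
    intro f
    simp_rw [← image_cornerSimplex_eq_convexHull, ← hL, hκ]
  have hκ_vol : κ = d ! * μ.real (convexHull ℝ (range v)) := by
    have := pullback 1
    simp only [Pi.one_apply, setIntegral_const, smul_eq_mul, mul_one,
      measureReal_cornerSimplex] at this
    rw [this]
    field_simp
  rw [pullback, hκ_vol]

theorem setIntegral_convexHull_pow_three (hd : Module.finrank ℝ E = d)
    (hv : AffineIndependent ℝ v) (ℓ : E →ₗ[ℝ] ℝ) :
    ∫ x in convexHull ℝ (range v), ℓ x ^ 3 ∂μ
      = d ! * μ.real (convexHull ℝ (range v))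
          * (((∑ m, ℓ (v m)) ^ 3 + 3 * (∑ m, ℓ (v m)) * (∑ m, ℓ (v m) ^ 2)
              + 2 * ∑ m, ℓ (v m) ^ 3) / (d + 3)!) := by
  simp only [setIntegral_convexHull_eq μ hd hv, _root_.map_sum, map_smul, smul_eq_mul,
    mul_comm (bary _ _), setIntegral_cornerSimplex_sum_mul_bary_pow_three]

end Simplex

theorem integral_linear_cube_over_simplex_general (n : ℕ)
    (v : Fin n → EuclideanSpace ℝ (Fin (n - 1))) (hv : AffineIndependent ℝ v)
    (ℓ : EuclideanSpace ℝ (Fin (n - 1)) →ₗ[ℝ] ℝ) (h0 : ∑ i, ℓ (v i) = 0) :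
    (∫ x in convexHull ℝ (Set.range v), (ℓ x) ^ 3)
      = (2 * (volume (convexHull ℝ (Set.range v))).toReal / (n * (n + 1) * (n + 2)))
          * ∑ i, (ℓ (v i)) ^ 3 := by
  cases n with
  | zero => simp
  | succ d =>
    rw [setIntegral_convexHull_pow_three volume (by simp) hv ℓ, h0, ← measureReal_def]
    simp only [Nat.factorial_succ]
    push_cast
    field_simp
    ring

theorem integral_linear_cube_over_simplex (n : ℕ) (hn : 1 ≤ n)
    (v : Fin n → EuclideanSpace ℝ (Fin (n - 1))) (hv : AffineIndependent ℝ v)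
    (ℓ : EuclideanSpace ℝ (Fin (n - 1)) →ₗ[ℝ] ℝ) (h0 : ∑ i, ℓ (v i) = 0) :
    (∫ x in convexHull ℝ (Set.range v), (ℓ x) ^ 3)
      = (2 * (volume (convexHull ℝ (Set.range v))).toReal / (n * (n + 1) * (n + 2)))
          * ∑ i, (ℓ (v i)) ^ 3 :=
  integral_linear_cube_over_simplex_general n v hv ℓ h0
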